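/- Let G be a finite abelian group and n̄ = (n_a)_{a∈G} a vector of non-negative integers summing to n such that m_a > 0 for all a ∈ G_+. Then E(n̄) ≤ 3^{|G|} · n^{2|G|} · exp(−n · D(ν_{n̄}‖μ_{n̄})). -/

import Mathlib

/-!
Writing `n_a` for the counts of `q`, the Gram matrix has entries
`6 n_{-q_j-q_k} + 3 m_{q_j} δ_{jk}`: a positive diagonal matrix plus a matrix that factors
through `G₊`. By the matrix determinant lemma its determinant is `∏_j 3 m_{q_j}` times the
determinant of a `G₊ × G₊` matrix with entries in `[0, 3n]`, hence at most
`|G₊|! (3n)^{|G₊|} ≤ 3^{|G|} n^{2|G|}`. For every `q ∈ S(n̄)`,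
`∏_j m_{q_j} = n^{2n} ∏_a μ(a)^{n_a}`, while the multinomial theorem gives
`|S(n̄)| ∏_a ν(a)^{n_a} ≤ 1`; since `exp(-n D(ν‖μ)) = ∏_a (μ(a)/ν(a))^{n_a}`,
summing over `S(n̄)` gives the bound.
-/

open scoped Classical

noncomputable section

namespace CLPaper

open Matrix

/-- The matrix `B_n`: rows indexed by `[n]³`, columns by `[n]`;
the row of `(x₁,x₂,x₃)` is `e_{x₁} + e_{x₂} + e_{x₃}`. -/
def B (n : ℕ) : Matrix (Fin n × Fin n × Fin n) (Fin n) ℤ :=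
  fun x j => (if x.1 = j then 1 else 0) + (if x.2.1 = j then 1 else 0) +
    (if x.2.2 = j then 1 else 0)

/-- `det (B_n[K])` for an `n`-element subset `K` of `[n]³` (rows enumerated by a fixed
bijection; the quantities we consider do not depend on this choice), `0` otherwise. -/
def subdet (n : ℕ) (K : Finset (Fin n × Fin n × Fin n)) : ℤ :=
  if h : K.card = n then
    ((B n).submatrix
      (fun i : Fin n => ((K.equivFin.symm (Fin.cast h.symm i)) : Fin n × Fin n × Fin n))
      id).det
  else 0

/-- The cokernel `ℤ^n / (row span of the rows of `B_n` indexed by `K`)`. -/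
def cokK (n : ℕ) (K : Finset (Fin n × Fin n × Fin n)) : Type :=
  (Fin n → ℤ) ⧸ Submodule.span ℤ ((fun x => B n x) '' (K : Set (Fin n × Fin n × Fin n)))

instance (n : ℕ) (K : Finset (Fin n × Fin n × Fin n)) : AddCommGroup (cokK n K) :=
  inferInstanceAs (AddCommGroup ((Fin n → ℤ) ⧸ Submodule.span ℤ _))

/-- The `p`-Sylow subgroup of an abelian group: the subgroup of elements annihilated
by a power of `p`. -/
def sylow (p : ℕ) (A : Type*) [AddCommGroup A] : AddSubgroup A where
  carrier := {x | ∃ k : ℕ, p ^ k • x = 0}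
  zero_mem' := ⟨0, by simp⟩
  add_mem' := by
    rintro x y ⟨k, hk⟩ ⟨l, hl⟩
    refine ⟨k + l, ?_⟩
    rw [smul_add, pow_add, mul_comm, mul_smul, hk, smul_zero, mul_comm, mul_smul, hl,
      smul_zero, add_zero]
  neg_mem' := by
    rintro x ⟨k, hk⟩
    exact ⟨k, by rw [smul_neg, hk, neg_zero]⟩

/-- Number of surjective homomorphisms from `A` to `G`. -/
def numSur (A G : Type*) [AddCommGroup A] [AddCommGroup G] : ℕ :=
  Nat.card {f : A →+ G // Function.Surjective f}

variable {G : Type*} [AddCommGroup G] [Fintype G]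

/-- The submatrix `B_{n,q}` of `B_n` consisting of the rows indexed by
`I_q = {(x₁,x₂,x₃) : q_{x₁} + q_{x₂} + q_{x₃} = 0}`. -/
def Bq (n : ℕ) (q : Fin n → G) :
    Matrix {x : Fin n × Fin n × Fin n // q x.1 + q x.2.1 + q x.2.2 = 0} (Fin n) ℤ :=
  fun x j => B n x.1 j

/-- The Gram matrix `B_{n,q}ᵀ B_{n,q}`. -/
def gram (n : ℕ) (q : Fin n → G) : Matrix (Fin n) (Fin n) ℤ :=
  (Bq n q)ᵀ * Bq n q

/-- `n_a(q) = #{i : q_i = a}`. -/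
def cnt {n : ℕ} (q : Fin n → G) (a : G) : ℕ :=
  (Finset.univ.filter (fun i => q i = a)).card

/-- `m_a = ∑_b n_b n_{-a-b}` associated to a counts vector `n̄ : G → ℕ`. -/
def mOf (nbar : G → ℕ) (a : G) : ℕ :=
  ∑ b : G, nbar b * nbar (-a - b)

/-- The matrix `M` indexed by `G₊ = {a : n_a > 0}`, with
`M(a,a) = 2 n_a n_{-2a} + m_a` and `M(a,b) = 2 √(n_a n_b) n_{-a-b}` for `a ≠ b`. -/
def Mmat (nbar : G → ℕ) :
    Matrix {a : G // 0 < nbar a} {a : G // 0 < nbar a} ℝ :=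
  fun a b =>
    if (a : G) = (b : G) then
      2 * (nbar (a : G) : ℝ) * (nbar (-(2 • (a : G))) : ℝ) + (mOf nbar (a : G) : ℝ)
    else
      2 * Real.sqrt ((nbar (a : G) : ℝ) * (nbar (b : G) : ℝ)) * (nbar (-(a : G) - b) : ℝ)

/-- The set `S(n̄)` of vectors `q ∈ G^n` with the prescribed counts. -/
def Sset (n : ℕ) (nbar : G → ℕ) : Finset (Fin n → G) :=
  Finset.univ.filter (fun q => ∀ a : G, cnt q a = nbar a)

/-- `E(n̄) = ∑_{q ∈ S(n̄)} det(B_{n,q}ᵀ B_{n,q}) / (3^{n+1} n^{2n})`. -/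
def Eval (n : ℕ) (nbar : G → ℕ) : ℝ :=
  (∑ q ∈ Sset n nbar, ((gram n q).det : ℝ)) / ((3 : ℝ) ^ (n + 1) * (n : ℝ) ^ (2 * n))

/-- Kullback–Leibler divergence of two probability vectors on `G` (natural log;
terms with `ν a = 0` contribute `0`). -/
def klDiv (ν μ : G → ℝ) : ℝ :=
  ∑ a : G, if ν a = 0 then 0 else ν a * Real.log (ν a / μ a)

/-- `ν_{n̄}(a) = n_a / n`. -/
def nuOf (n : ℕ) (nbar : G → ℕ) : G → ℝ := fun a => (nbar a : ℝ) / n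

/-- `μ_{n̄}(a) = m_a / n²`. -/
def muOf (n : ℕ) (nbar : G → ℕ) : G → ℝ := fun a => (mOf nbar a : ℝ) / (n : ℝ) ^ 2

/-- `t_n = 2C √(|G| n log n)`. -/
def tSeq (G : Type*) [Fintype G] (C : ℝ) (n : ℕ) : ℝ :=
  2 * C * Real.sqrt ((Fintype.card G) * n * Real.log n)

/-- `r_n = 4C |G| log n`. -/
def rSeq (G : Type*) [Fintype G] (C : ℝ) (n : ℕ) : ℝ :=
  4 * C * (Fintype.card G) * Real.log n

/-- `n̄ ∈ D_n`: the counts sum to `n` and the support generates `G`. -/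
def memD (n : ℕ) (nbar : G → ℕ) : Prop :=
  (∑ a : G, nbar a = n) ∧ AddSubgroup.closure {a : G | 0 < nbar a} = ⊤

/-- `n̄ ∈ D_n'`: moreover `m_a > 0` for all `a ∈ G₊`. -/
def memD' (n : ℕ) (nbar : G → ℕ) : Prop :=
  memD n nbar ∧ ∀ a : G, 0 < nbar a → 0 < mOf nbar a

/-- `u_H(g) = 1/|H|` for `g ∈ H` and `0` otherwise. -/
def uH (H : AddSubgroup G) : G → ℝ :=
  fun g => if g ∈ H then (Nat.card H : ℝ)⁻¹ else 0

/-- `n̄ ∈ B(n,H)`. -/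
def memB (C : ℝ) (n : ℕ) (H : AddSubgroup G) (nbar : G → ℕ) : Prop :=
  memD' n nbar ∧ (∀ a : G, |(nbar a : ℝ) - n * uH H a| ≤ tSeq G C n) ∧
    (∑ a ∈ Finset.univ.filter (fun a : G => a ∉ H), (nbar a : ℝ)) ≤ rSeq G C n

end CLPaper

namespace Matrix

variable {ι σ K : Type*} [DecidableEq σ] [Field K]

lemma one_submatrix_mul_mul_transpose [Fintype σ] (g : ι → σ) (C : Matrix σ σ K) :
    (1 : Matrix σ σ K).submatrix g id * C * ((1 : Matrix σ σ K).submatrix g id)ᵀ =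
      C.submatrix g g := by
  ext i k
  simp [mul_apply, one_apply]

lemma transpose_one_submatrix_mul_diagonal_mul [Fintype ι] [DecidableEq ι] (g : ι → σ)
    (w : ι → K) :
    ((1 : Matrix σ σ K).submatrix g id)ᵀ * diagonal w * (1 : Matrix σ σ K).submatrix g id =
      diagonal fun a => ∑ i with g i = a, w i := by
  ext a b
  rw [mul_apply]
  simp only [mul_diagonal, transpose_apply, submatrix_apply, id, one_apply, diagonal_apply,
    Finset.sum_filter]
  split_ifs with hab
  · subst hab; simp +contextual [eq_comm]
  · refine Finset.sum_eq_zero fun i _ => ?_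
    grind

theorem det_diagonal_add_submatrix [Fintype ι] [DecidableEq ι] [Fintype σ] (d : ι → K)
    (hd : ∀ i, d i ≠ 0) (g : ι → σ) (C : Matrix σ σ K) :
    (diagonal d + C.submatrix g g).det =
      (∏ i, d i) * (1 + C * diagonal fun a => ∑ i with g i = a, (d i)⁻¹).det := by
  have hdiag : (diagonal d)⁻¹ = diagonal d⁻¹ :=
    inv_eq_left_inv (by simp [diagonal_mul_diagonal, hd])
  rw [← one_submatrix_mul_mul_transpose g C, Matrix.mul_assoc, det_add_mul, det_diagonal, hdiag,
    Matrix.mul_assoc, Matrix.mul_assoc, ← Matrix.mul_assoc _ (diagonal _),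
    transpose_one_submatrix_mul_diagonal_mul]
  · rfl
  · simp [det_diagonal, Finset.prod_ne_zero_iff, hd]

end Matrix

namespace CLPaper

open Matrix

variable {G : Type*} {n : ℕ}

lemma factorial_mul_pow_le_pow_mul_pow {k K : ℕ} {c : ℝ} (hc : 1 ≤ c) (hn : 1 ≤ n)
    (hkn : k ≤ n) (hkK : k ≤ K) :
    (k.factorial : ℝ) * (c * n) ^ k ≤ c ^ K * (n : ℝ) ^ (2 * K) := by
  have hn' : (1 : ℝ) ≤ n := by exact_mod_cast hn
  calc (k.factorial : ℝ) * (c * n) ^ k ≤ (n : ℝ) ^ k * (c * n) ^ k := by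
        gcongr
        exact_mod_cast (Nat.factorial_le_pow k).trans (Nat.pow_le_pow_left hkn k)
    _ = c ^ k * (n : ℝ) ^ (2 * k) := by ring
    _ ≤ c ^ K * (n : ℝ) ^ (2 * K) := by gcongr

lemma sum_comp_eq_sum_cnt_smul {M : Type*} [AddCommMonoid M] [Fintype G] (q : Fin n → G)
    (f : G → M) : ∑ j, f (q j) = ∑ a, cnt q a • f a := by
  rw [← Finset.sum_fiberwise' _ q f]
  simp only [Finset.sum_const]
  rfl

lemma prod_comp_eq_prod_pow_cnt {M : Type*} [CommMonoid M] [Fintype G] (q : Fin n → G)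
    (f : G → M) : ∏ j, f (q j) = ∏ a, f a ^ cnt q a := by
  rw [← Finset.prod_fiberwise' _ q f]
  simp only [Finset.prod_const]
  rfl

lemma sum_ite_add_eq_zero [AddCommGroup G] (q : Fin n → G) (a : G) :
    (∑ z, if a + q z = 0 then (1 : ℤ) else 0) = cnt q (-a) := by
  simp [cnt, Finset.sum_boole, add_eq_zero_iff_neg_eq, eq_comm]

lemma gram_apply [AddCommGroup G] [Fintype G] (q : Fin n → G) (j k : Fin n) :
    gram n q j k = 6 * (cnt q (-q j - q k) : ℤ) +
      if j = k then 3 * (mOf (cnt q) (q j) : ℤ) else 0 := by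
  have hgram : gram n q j k =
      ∑ x, B n x j * B n x k * if q x.1 + q x.2.1 + q x.2.2 = 0 then 1 else 0 := by
    simp only [mul_ite, mul_one, mul_zero]
    rw [← Finset.sum_filter, ← Finset.sum_subtype_eq_sum_filter, Finset.subtype_univ]
    rfl
  rw [hgram]
  simp only [B, Fintype.sum_prod_type, mul_add, add_mul, ite_mul, one_mul, zero_mul,
    Finset.sum_add_distrib, Finset.sum_ite_irrel, Finset.sum_const_zero, Finset.sum_ite_eq',
    Finset.mem_univ, if_true]
  -- Of the nine terms of the expanded product, the three with `x_i = j = k` and the six with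
  -- `x_i = j`, `x_i' = k` (`i ≠ i'`) have conditions that agree up to commutativity of `+`.
  conv_lhs => abel_nf
  simp only [← add_assoc, sum_ite_add_eq_zero, neg_add']
  rw [sum_comp_eq_sum_cnt_smul q fun b => (cnt q (-q j - b) : ℤ)]
  simp only [mOf, nsmul_eq_mul]
  split_ifs <;> push_cast <;> ring

lemma cnt_apply_pos (q : Fin n → G) (j : Fin n) : 0 < cnt q (q j) :=
  Finset.card_pos.mpr ⟨j, by simp⟩

lemma cnt_le (q : Fin n → G) (a : G) : cnt q a ≤ n :=
  (Finset.card_filter_le _ _).trans_eq (Finset.card_fin n)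

lemma card_support_cnt_le [Fintype G] (q : Fin n → G) :
    Fintype.card {a : G // 0 < cnt q a} ≤ n := by
  refine (Fintype.card_le_of_surjective (fun j => ⟨q j, cnt_apply_pos q j⟩)
    fun ⟨a, ha⟩ => ?_).trans_eq (Fintype.card_fin n)
  obtain ⟨j, hj⟩ := Finset.card_pos.mp ha
  exact ⟨j, Subtype.ext (Finset.mem_filter.mp hj).2⟩

lemma le_mOf_of_pos [AddCommGroup G] [Fintype G] (nbar : G → ℕ) {a b : G} (hb : 0 < nbar b) :
    nbar (-a - b) ≤ mOf nbar a := by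
  calc nbar (-a - b) ≤ nbar (-a - b) * nbar (-a - (-a - b)) := by
        rw [sub_sub_cancel]; exact Nat.le_mul_of_pos_right _ hb
    _ ≤ mOf nbar a :=
        Finset.single_le_sum (f := fun c => nbar c * nbar (-a - c)) (by simp) (Finset.mem_univ _)

section Determinant

variable [AddCommGroup G] [Fintype G]

lemma gram_cast_eq (q : Fin n → G) :
    (gram n q).map (Int.cast : ℤ → ℝ) =
      diagonal (fun j => 3 * (mOf (cnt q) (q j) : ℝ)) +
        (of fun a b : G => 6 * (cnt q (-a - b) : ℝ)).submatrix q q := by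
  ext j k
  rw [map_apply, gram_apply, Matrix.add_apply, diagonal_apply, submatrix_apply, of_apply]
  split_ifs with h
  · subst h; push_cast; ring
  · push_cast; ring

def reducedGram (q : Fin n → G) : Matrix {a : G // 0 < cnt q a} {a : G // 0 < cnt q a} ℝ :=
  1 + (of fun a b : {a : G // 0 < cnt q a} => 6 * (cnt q (-a - b) : ℝ)) *
    diagonal fun b : {a : G // 0 < cnt q a} => (cnt q b : ℝ) / (3 * mOf (cnt q) b)

variable {q : Fin n → G} (hm : ∀ a, 0 < cnt q a → 0 < mOf (cnt q) a)
include hm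

lemma det_gram_eq :
    ((gram n q).det : ℝ) = (∏ j, 3 * (mOf (cnt q) (q j) : ℝ)) * (reducedGram q).det := by
  let g : Fin n → {a : G // 0 < cnt q a} := fun j => ⟨q j, cnt_apply_pos q j⟩
  have hd : ∀ j, 3 * (mOf (cnt q) (q j) : ℝ) ≠ 0 := fun j => by
    have := hm _ (cnt_apply_pos q j); positivity
  have hc : (fun b => ∑ j with g j = b, (3 * (mOf (cnt q) (q j) : ℝ))⁻¹) =
      fun b : {a : G // 0 < cnt q a} => (cnt q b : ℝ) / (3 * mOf (cnt q) b) :=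
    funext fun b => by
    have hfib : (Finset.univ.filter fun j => g j = b) = Finset.univ.filter fun j => q j = b := by
      simp [g, Subtype.ext_iff]
    rw [hfib, Finset.sum_congr rfl fun j hj => by rw [(Finset.mem_filter.mp hj).2],
      Finset.sum_const, nsmul_eq_mul, div_eq_mul_inv]
    rfl
  rw [Int.cast_det, gram_cast_eq, reducedGram, ← hc]
  exact det_diagonal_add_submatrix _ hd g (of fun a b => 6 * (cnt q (-a - b) : ℝ))

lemma abs_reducedGram_apply_le (hn : 0 < n) (a b : {a : G // 0 < cnt q a}) :
    |reducedGram q a b| ≤ 3 * n := by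
  have hmb : (0 : ℝ) < mOf (cnt q) b := by exact_mod_cast hm b b.2
  have hab : (cnt q (-a - b) : ℝ) ≤ mOf (cnt q) b := by
    rw [neg_sub_comm]; exact_mod_cast le_mOf_of_pos (cnt q) a.2
  have hbn : (cnt q b : ℝ) ≤ n := by exact_mod_cast cnt_le q b
  have hn' : (1 : ℝ) ≤ n := by exact_mod_cast hn
  have hoff_nonneg : 0 ≤ 6 * (cnt q (-a - b) : ℝ) * (cnt q b / (3 * mOf (cnt q) b)) := by
    positivity
  have hoff_le : 6 * (cnt q (-a - b) : ℝ) * (cnt q b / (3 * mOf (cnt q) b)) ≤ 2 * cnt q b := by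
    rw [mul_div_assoc', div_le_iff₀ (by positivity)]
    nlinarith [(cnt q b).cast_nonneg (α := ℝ)]
  have hone : 0 ≤ (1 : Matrix _ _ ℝ) a b ∧ (1 : Matrix _ _ ℝ) a b ≤ 1 := by
    rw [one_apply]; split_ifs <;> norm_num
  rw [reducedGram, Matrix.add_apply, mul_diagonal, of_apply, abs_le]
  constructor <;> linarith

theorem det_gram_le (hn : 0 < n) :
    ((gram n q).det : ℝ) ≤ (∏ j, 3 * (mOf (cnt q) (q j) : ℝ)) *
      (3 ^ Fintype.card G * (n : ℝ) ^ (2 * Fintype.card G)) := by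
  rw [det_gram_eq hm]
  gcongr
  calc (reducedGram q).det ≤ |(reducedGram q).det| := le_abs_self _
    _ ≤ (Fintype.card {a : G // 0 < cnt q a}).factorial • (3 * (n : ℝ)) ^ _ :=
      Matrix.det_le (abv := AbsoluteValue.abs) (abs_reducedGram_apply_le hm hn)
    _ ≤ 3 ^ Fintype.card G * (n : ℝ) ^ (2 * Fintype.card G) := by
      rw [nsmul_eq_mul]
      exact factorial_mul_pow_le_pow_mul_pow (by norm_num) hn (card_support_cnt_le q)
        (Fintype.card_subtype_le _)

end Determinant

section Entropy

variable [Fintype G] {nbar : G → ℕ}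

lemma card_Sset_mul_prod_pow_le_one {p : G → ℝ} (hp : ∀ a, 0 ≤ p a) (hp1 : ∑ a, p a = 1) :
    (Sset n nbar).card * ∏ a, p a ^ nbar a ≤ 1 := by
  calc (Sset n nbar).card * ∏ a, p a ^ nbar a = ∑ q ∈ Sset n nbar, ∏ j, p (q j) := by
        rw [Finset.sum_congr rfl fun q hq => by
          rw [prod_comp_eq_prod_pow_cnt, funext (Finset.mem_filter.mp hq).2],
          Finset.sum_const, nsmul_eq_mul]
    _ ≤ ∑ q : Fin n → G, ∏ j, p (q j) :=
        Finset.sum_le_sum_of_subset_of_nonneg (Finset.subset_univ _)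
          fun q _ _ => Finset.prod_nonneg fun j _ => hp (q j)
    _ = 1 := by rw [← Fintype.prod_sum, hp1, Finset.prod_const_one]

lemma exp_neg_mul_klDiv_nuOf (hn : 0 < n) {μ : G → ℝ} (hμ : ∀ a, 0 < nbar a → 0 < μ a) :
    Real.exp (-n * klDiv (nuOf n nbar) μ) = ∏ a, (μ a / nuOf n nbar a) ^ nbar a := by
  rw [klDiv, Finset.mul_sum, Real.exp_sum]
  refine Finset.prod_congr rfl fun a _ => ?_
  rcases (nbar a).eq_zero_or_pos with ha | ha
  · simp [nuOf, ha]
  · have hν : 0 < nuOf n nbar a := by unfold nuOf; positivity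
    have hμa := hμ a ha
    rw [if_neg hν.ne', ← Real.exp_log (div_pos hμa hν), ← Real.exp_nat_mul,
      Real.log_div hμa.ne' hν.ne', Real.log_div hν.ne' hμa.ne']
    congr 1
    simp only [nuOf]
    field_simp
    ring

lemma card_Sset_mul_prod_pow_le_exp (hn : 0 < n) (hsum : ∑ a, nbar a = n) {μ : G → ℝ}
    (hμ : ∀ a, 0 < nbar a → 0 < μ a) :
    (Sset n nbar).card * ∏ a, μ a ^ nbar a ≤ Real.exp (-n * klDiv (nuOf n nbar) μ) := by
  have hν1 : ∑ a, nuOf n nbar a = 1 := by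
    simp only [nuOf]
    rw [← Finset.sum_div, ← Nat.cast_sum, hsum, div_self (by positivity)]
  have hsplit : ∏ a, μ a ^ nbar a =
      (∏ a, nuOf n nbar a ^ nbar a) * ∏ a, (μ a / nuOf n nbar a) ^ nbar a := by
    rw [← Finset.prod_mul_distrib]
    refine Finset.prod_congr rfl fun a _ => ?_
    rcases (nbar a).eq_zero_or_pos with ha | ha
    · simp [ha]
    · rw [← mul_pow, mul_div_cancel₀ _ (by unfold nuOf; positivity)]
  rw [hsplit, ← mul_assoc, exp_neg_mul_klDiv_nuOf hn hμ]
  refine mul_le_of_le_one_left (Finset.prod_nonneg fun a _ => ?_)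
    (card_Sset_mul_prod_pow_le_one (fun a => by unfold nuOf; positivity) hν1)
  rcases (nbar a).eq_zero_or_pos with ha | ha
  · simp [ha]
  · have := hμ a ha; unfold nuOf; positivity

end Entropy

variable [AddCommGroup G] [Fintype G] {nbar : G → ℕ}

lemma prod_mOf_pow_eq (hn : 0 < n) (hsum : ∑ a, nbar a = n) :
    ∏ a, (mOf nbar a : ℝ) ^ nbar a = (n : ℝ) ^ (2 * n) * ∏ a, muOf n nbar a ^ nbar a := by
  simp only [muOf, div_pow, Finset.prod_div_distrib, ← pow_mul, Finset.prod_pow_eq_pow_sum]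
  rw [← Finset.mul_sum, hsum, mul_div_cancel₀ _ (by positivity)]

lemma det_gram_le_of_mem_Sset (hn : 0 < n) (hsum : ∑ a, nbar a = n)
    (hm : ∀ a, 0 < nbar a → 0 < mOf nbar a) {q : Fin n → G} (hq : q ∈ Sset n nbar) :
    ((gram n q).det : ℝ) ≤ 3 ^ n * (n : ℝ) ^ (2 * n) * (∏ a, muOf n nbar a ^ nbar a) *
      (3 ^ Fintype.card G * (n : ℝ) ^ (2 * Fintype.card G)) := by
  have hcnt : cnt q = nbar := funext (Finset.mem_filter.mp hq).2
  have hprod : ∏ j, 3 * (mOf (cnt q) (q j) : ℝ) =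
      3 ^ n * (n : ℝ) ^ (2 * n) * ∏ a, muOf n nbar a ^ nbar a := by
    rw [Finset.prod_mul_distrib, Finset.prod_const, Finset.card_fin,
      prod_comp_eq_prod_pow_cnt q fun a => (mOf (cnt q) a : ℝ), hcnt, prod_mOf_pow_eq hn hsum,
      mul_assoc]
  rw [← hprod]
  exact det_gram_le (hcnt ▸ hm) hn

end CLPaper

open CLPaper

/-- `E(n̄) ≤ 3^{|G|} n^{2|G|} exp(-n D(ν_{n̄}‖μ_{n̄}))` whenever `m_a > 0` for all
`a ∈ G₊`. -/
theorem Eval_le_exp (G : Type*) [AddCommGroup G] [Fintype G]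
    (n : ℕ) (hn : 0 < n) (nbar : G → ℕ) (hsum : ∑ a : G, nbar a = n)
    (hm : ∀ a : G, 0 < nbar a → 0 < mOf nbar a) :
    Eval n nbar ≤ (3 : ℝ) ^ (Fintype.card G) * (n : ℝ) ^ (2 * Fintype.card G) *
      Real.exp (-(n : ℝ) * klDiv (nuOf n nbar) (muOf n nbar)) := by
  set C : ℝ := 3 ^ Fintype.card G * (n : ℝ) ^ (2 * Fintype.card G)
  set Pμ : ℝ := ∏ a, muOf n nbar a ^ nbar a
  have hμ : ∀ a, 0 < nbar a → 0 < muOf n nbar a := fun a ha => by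
    have := hm a ha; unfold muOf; positivity
  have hC : 0 ≤ C := by positivity
  have hSμ : 0 ≤ (Sset n nbar).card * Pμ :=
    mul_nonneg (by positivity)
      (Finset.prod_nonneg fun a _ => pow_nonneg (by unfold muOf; positivity) _)
  calc Eval n nbar
      ≤ (Sset n nbar).card * (3 ^ n * (n : ℝ) ^ (2 * n) * Pμ * C) /
          ((3 : ℝ) ^ (n + 1) * (n : ℝ) ^ (2 * n)) := by
        rw [Eval, ← nsmul_eq_mul, ← Finset.sum_const]
        gcongr with q hq
        exact det_gram_le_of_mem_Sset hn hsum hm hq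
    _ = C * ((Sset n nbar).card * Pμ) / 3 := by
        field_simp
        ring
    _ ≤ C * ((Sset n nbar).card * Pμ) := by linarith [mul_nonneg hC hSμ]
    _ ≤ C * Real.exp (-(n : ℝ) * klDiv (nuOf n nbar) (muOf n nbar)) :=
        mul_le_mul_of_nonneg_left (card_Sset_mul_prod_pow_le_exp hn hsum hμ) hC
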